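/- arXiv:2110.14242 — 4 statements merged into one kernel-verified Lean document; each statement's English description precedes it below -/
import Mathlib

section
/- Suppose S ⊆ L is nonempty, Z ⊆ C satisfies |Z| ≤ m, and cost(S, C \ Z) ≤ OPT (that is, (S, Z) is a bi-criteria approximate solution with approximation factor 1 in cost). For each x ∈ Z let g(x) ∈ L be a facility minimizing d(x, ·) over L, and let G = { g(x) : x ∈ Z }. Then for every subset C' ⊆ C with |C'| ≥ |C| − m and every partition O = (O_1, …, O_k) of C' into k (possibly empty) parts, there exists a subset S' ⊆ S ∪ G with |S'| ≤ k and S' nonempty such that Ψ(S', O) ≤ 3^z · Ψ*(O). -/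
open Finset

noncomputable section

/-- Minimum of `f` over a finite set (`sInf` of the image; `0` on the empty set). -/
def minOver {X : Type*} (s : Finset X) (f : X → ℝ) : ℝ := sInf (f '' ↑s)

/-- Maximum of `f` over a finite set (`sSup` of the image; `0` on the empty set). -/
def maxOver {X : Type*} (s : Finset X) (f : X → ℝ) : ℝ := sSup (f '' ↑s)

/-- `cost(F, C') = max_{x ∈ C'} min_{f ∈ F} d(f, x)^z`. -/
def ksCost {X : Type*} [MetricSpace X] (z : ℝ) (F C' : Finset X) : ℝ :=
  maxOver C' fun x => minOver F fun f => dist f x ^ z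

/-- `Ψ(F, O) = max_{1 ≤ i ≤ k} min_{f ∈ F} max_{x ∈ O_i} d(x, f)^z`. -/
def Psi {X : Type*} [MetricSpace X] (z : ℝ) {k : ℕ} (F : Finset X)
    (O : Fin k → Finset X) : ℝ :=
  ⨆ i : Fin k, minOver F fun f => maxOver (O i) fun x => dist x f ^ z

/-- `Ψ*(O) = min_{F ⊆ L, |F| = k} Ψ(F, O)`. -/
def PsiStar {X : Type*} [MetricSpace X] (z : ℝ) (L : Finset X) {k : ℕ}
    (O : Fin k → Finset X) : ℝ :=
  sInf ((fun F => Psi z F O) '' {F : Finset X | F ⊆ L ∧ F.card = k})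

/-- `OPT = min_{F ⊆ L, |F| = k, Z ⊆ C, |Z| ≤ m} cost(F, C \ Z)`. -/
def OPTCost {X : Type*} [MetricSpace X] [DecidableEq X] (z : ℝ) (k m : ℕ)
    (L C : Finset X) : ℝ :=
  sInf ((fun p : Finset X × Finset X => ksCost z p.1 (C \ p.2)) ''
    {p : Finset X × Finset X | p.1 ⊆ L ∧ p.1.card = k ∧ p.2 ⊆ C ∧ p.2.card ≤ m})

/-! Let `F ⊆ L` be a `k`-set attaining `Ψ*(O) =: P`, so each part `O i` lies within `P^(1/z)` of a
centre `c ∈ F`. Discarding `C \ C'` as outliers shows `OPT ≤ cost(F, C') ≤ P`. Hence every client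
`x ∈ C'` is within `P^(1/z)` of `S ∪ G`: via `S` if `x ∉ Z`, since `cost(S, C \ Z) ≤ OPT`, and via
`g x` if `x ∈ Z`, since `g x` is at least as close to `x` as the centre of its part. The facility
serving any one point of a part serves the whole part within `3 P^(1/z)`, by the triangle inequality
through that point and the part's centre. -/

section MinMax

variable {X : Type*} {s : Finset X} {f : X → ℝ} {a : ℝ} {x : X}

lemma minOver_le (hx : x ∈ s) : minOver s f ≤ f x :=
  csInf_le (s.finite_toSet.image f).bddBelow ⟨x, hx, rfl⟩

lemma le_maxOver (hx : x ∈ s) : f x ≤ maxOver s f :=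
  le_csSup (s.finite_toSet.image f).bddAbove ⟨x, hx, rfl⟩

lemma exists_minOver_eq (hs : s.Nonempty) : ∃ x ∈ s, minOver s f = f x := by
  obtain ⟨x, hx, hfx⟩ :=
    ((coe_nonempty.mpr hs).image f).csInf_mem (s.finite_toSet.image f)
  exact ⟨x, hx, hfx.symm⟩

lemma minOver_nonneg (h : ∀ x ∈ s, 0 ≤ f x) : 0 ≤ minOver s f :=
  Real.sInf_nonneg (by rintro _ ⟨x, hx, rfl⟩; exact h x hx)

lemma minOver_le_iff (hs : s.Nonempty) : minOver s f ≤ a ↔ ∃ x ∈ s, f x ≤ a := by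
  obtain ⟨x₀, hx₀, hmin⟩ := exists_minOver_eq (f := f) hs
  exact ⟨fun h => ⟨x₀, hx₀, hmin ▸ h⟩, fun ⟨x, hx, hfx⟩ => (minOver_le hx).trans hfx⟩

lemma maxOver_le_iff (ha : 0 ≤ a) : maxOver s f ≤ a ↔ ∀ x ∈ s, f x ≤ a :=
  ⟨fun h _ hx => (le_maxOver hx).trans h,
    fun h => Real.sSup_le (by rintro _ ⟨x, hx, rfl⟩; exact h x hx) ha⟩

lemma maxOver_nonneg (h : ∀ x ∈ s, 0 ≤ f x) : 0 ≤ maxOver s f :=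
  Real.sSup_nonneg (by rintro _ ⟨x, hx, rfl⟩; exact h x hx)

end MinMax

section Costs

variable {X : Type*} [MetricSpace X] {z a : ℝ}

lemma ksCost_nonneg (F C' : Finset X) : 0 ≤ ksCost z F C' :=
  maxOver_nonneg fun _ _ => minOver_nonneg fun _ _ => Real.rpow_nonneg dist_nonneg z

lemma ksCost_le_iff {F C' : Finset X} (hF : F.Nonempty) (ha : 0 ≤ a) :
    ksCost z F C' ≤ a ↔ ∀ x ∈ C', ∃ f ∈ F, dist f x ^ z ≤ a := by
  simp only [ksCost, maxOver_le_iff ha, minOver_le_iff hF]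

lemma Psi_nonneg {k : ℕ} (F : Finset X) (O : Fin k → Finset X) : 0 ≤ Psi z F O :=
  Real.iSup_nonneg fun _ =>
    minOver_nonneg fun _ _ => maxOver_nonneg fun _ _ => Real.rpow_nonneg dist_nonneg z

lemma Psi_le_iff {k : ℕ} {F : Finset X} {O : Fin k → Finset X} (hF : F.Nonempty)
    (ha : 0 ≤ a) : Psi z F O ≤ a ↔ ∀ i, ∃ f ∈ F, ∀ x ∈ O i, dist x f ^ z ≤ a := by
  simp only [← maxOver_le_iff ha, ← minOver_le_iff hF]
  exact ⟨fun h i => (le_ciSup (Set.finite_range _).bddAbove i).trans h,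
    fun h => Real.iSup_le h ha⟩

lemma ksCost_biUnion_le_Psi [DecidableEq X] {k : ℕ} {F : Finset X} (hF : F.Nonempty)
    (O : Fin k → Finset X) : ksCost z F (univ.biUnion O) ≤ Psi z F O := by
  have hPsi : 0 ≤ Psi z F O := Psi_nonneg F O
  have hcenter := (Psi_le_iff hF hPsi).1 le_rfl
  rw [ksCost_le_iff hF hPsi]
  intro x hx
  obtain ⟨i, -, hxi⟩ := mem_biUnion.mp hx
  obtain ⟨f, hf, hfO⟩ := hcenter i
  exact ⟨f, hf, dist_comm f x ▸ hfO x hxi⟩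

lemma exists_Psi_eq_PsiStar {k : ℕ} {L : Finset X} (hL : k ≤ L.card) (O : Fin k → Finset X) :
    ∃ F ⊆ L, F.card = k ∧ Psi z F O = PsiStar z L O := by
  have hfin : {F : Finset X | F ⊆ L ∧ F.card = k}.Finite :=
    (L.powersetCard k).finite_toSet.subset fun F hF => by simpa [mem_powersetCard] using hF
  have hne : {F : Finset X | F ⊆ L ∧ F.card = k}.Nonempty := L.exists_subset_card_eq hL
  obtain ⟨F, ⟨hFL, hFk⟩, hF⟩ := (hne.image fun F => Psi z F O).csInf_mem (hfin.image _)
  exact ⟨F, hFL, hFk, hF⟩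

lemma OPTCost_le_ksCost [DecidableEq X] {k m : ℕ} {L C C' F : Finset X} (hFL : F ⊆ L)
    (hFk : F.card = k) (hC' : C' ⊆ C) (hC'card : C.card - m ≤ C'.card) :
    OPTCost z k m L C ≤ ksCost z F C' := by
  have hfeasible : (F, C \ C') ∈
      {p : Finset X × Finset X | p.1 ⊆ L ∧ p.1.card = k ∧ p.2 ⊆ C ∧ p.2.card ≤ m} := by
    refine ⟨hFL, hFk, sdiff_subset, ?_⟩
    rw [card_sdiff_of_subset hC']
    omega
  have hbdd : BddBelow ((fun p : Finset X × Finset X => ksCost z p.1 (C \ p.2)) ''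
      {p : Finset X × Finset X | p.1 ⊆ L ∧ p.1.card = k ∧ p.2 ⊆ C ∧ p.2.card ≤ m}) :=
    ⟨0, by rintro _ ⟨p, -, rfl⟩; exact ksCost_nonneg _ _⟩
  have h : OPTCost z k m L C ≤ ksCost z F (C \ (C \ C')) := csInf_le hbdd ⟨_, hfeasible, rfl⟩
  rwa [Finset.sdiff_sdiff_eq_self hC'] at h

end Costs

section ThreeHops

variable {X : Type*} [MetricSpace X] {z P : ℝ}

lemma dist_rpow_le_three_rpow_mul (hz : 0 < z) {a b c d : X} (hab : dist a b ^ z ≤ P)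
    (hbc : dist b c ^ z ≤ P) (hcd : dist c d ^ z ≤ P) : dist a d ^ z ≤ 3 ^ z * P := by
  have hP : 0 ≤ P := (Real.rpow_nonneg dist_nonneg z).trans hab
  have hr {x y : X} (h : dist x y ^ z ≤ P) : dist x y ≤ P ^ z⁻¹ :=
    (Real.le_rpow_inv_iff_of_pos dist_nonneg hP hz).2 h
  have hsum : dist a d ≤ 3 * P ^ z⁻¹ := by
    linarith [dist_triangle4 a b c d, hr hab, hr hbc, hr hcd]
  calc dist a d ^ z ≤ (3 * P ^ z⁻¹) ^ z := Real.rpow_le_rpow dist_nonneg hsum hz.le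
    _ = 3 ^ z * P := by
      rw [Real.mul_rpow (by norm_num) (Real.rpow_nonneg hP _), Real.rpow_inv_rpow hP hz.ne']

lemma exists_mem_forall_dist_rpow_le_three_rpow_mul (hz : 0 < z) {A B : Finset X} {c : X}
    (hA : A.Nonempty) (hc : ∀ y ∈ B, dist y c ^ z ≤ P)
    (hserve : ∀ x ∈ B, ∃ a ∈ A, dist x a ^ z ≤ P) :
    ∃ a ∈ A, ∀ y ∈ B, dist y a ^ z ≤ 3 ^ z * P := by
  rcases B.eq_empty_or_nonempty with rfl | ⟨x, hx⟩
  · obtain ⟨a, ha⟩ := hA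
    exact ⟨a, ha, by simp⟩
  obtain ⟨a, ha, hxa⟩ := hserve x hx
  refine ⟨a, ha, fun y hy => dist_rpow_le_three_rpow_mul hz (hc y hy) ?_ hxa⟩
  rw [dist_comm]
  exact hc x hx

end ThreeHops

lemma exists_subset_card_le_Psi_le {X : Type*} [MetricSpace X] [DecidableEq X] {z b : ℝ} {k : ℕ} (hk : 1 ≤ k)
    {A : Finset X} {O : Fin k → Finset X} (hb : 0 ≤ b)
    (h : ∀ i, ∃ a ∈ A, ∀ y ∈ O i, dist y a ^ z ≤ b) :
    ∃ S' ⊆ A, S'.card ≤ k ∧ S'.Nonempty ∧ Psi z S' O ≤ b := by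
  choose f hfA hf using h
  have hne : (univ.image f).Nonempty := univ_nonempty_iff.mpr ⟨⟨0, hk⟩⟩ |>.image f
  refine ⟨univ.image f, by simpa [subset_iff] using hfA, card_image_le.trans (by simp), hne, ?_⟩
  exact (Psi_le_iff hne hb).2 fun i => ⟨f i, mem_image_of_mem f (mem_univ i), hf i⟩

theorem list_outlier_k_supplier_conversion_general {X : Type*} [MetricSpace X] [DecidableEq X]
    (k m : ℕ) (hk : 1 ≤ k) (z : ℝ) (hz : 0 < z)
    (C L : Finset X) (hL : k ≤ L.card)
    (S : Finset X) (hS : S.Nonempty)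
    (Z : Finset X)
    (hcost : ksCost z S (C \ Z) ≤ OPTCost z k m L C)
    (g : X → X)
    (hgmin : ∀ x ∈ Z, ∀ f ∈ L, dist x (g x) ≤ dist x f)
    (C' : Finset X) (hC'sub : C' ⊆ C) (hC'card : C.card - m ≤ C'.card)
    (O : Fin k → Finset X)
    (hcover : Finset.univ.biUnion O = C') :
    ∃ S' : Finset X, S' ⊆ S ∪ Z.image g ∧ S'.card ≤ k ∧ S'.Nonempty ∧
      Psi z S' O ≤ (3 : ℝ) ^ z * PsiStar z L O := by
  obtain ⟨F, hFL, hFk, hF⟩ := exists_Psi_eq_PsiStar (z := z) hL O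
  set P := PsiStar z L O
  have hFne : F.Nonempty := card_pos.mp (by omega)
  have hP : 0 ≤ P := hF ▸ Psi_nonneg F O
  have hcenter : ∀ i, ∃ c ∈ F, ∀ y ∈ O i, dist y c ^ z ≤ P :=
    (Psi_le_iff hFne hP).1 hF.le
  have hOPT : OPTCost z k m L C ≤ P :=
    hF ▸ (OPTCost_le_ksCost hFL hFk hC'sub hC'card).trans (hcover ▸ ksCost_biUnion_le_Psi hFne O)
  have hserve : ∀ i, ∀ x ∈ O i, ∃ a ∈ S ∪ Z.image g, dist x a ^ z ≤ P := by
    intro i x hx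
    by_cases hxZ : x ∈ Z
    · obtain ⟨c, hcF, hc⟩ := hcenter i
      refine ⟨g x, mem_union_right _ (mem_image_of_mem g hxZ), (hc x hx).trans' ?_⟩
      exact Real.rpow_le_rpow dist_nonneg (hgmin x hxZ c (hFL hcF)) hz.le
    · have hxC : x ∈ C \ Z :=
        mem_sdiff.mpr ⟨hC'sub (hcover ▸ mem_biUnion.mpr ⟨i, mem_univ i, hx⟩), hxZ⟩
      obtain ⟨s, hs, hsx⟩ := (ksCost_le_iff hS hP).1 (hcost.trans hOPT) x hxC
      exact ⟨s, mem_union_left _ hs, dist_comm x s ▸ hsx⟩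
  refine exists_subset_card_le_Psi_le hk (by positivity) fun i => ?_
  obtain ⟨c, -, hc⟩ := hcenter i
  exact exists_mem_forall_dist_rpow_le_three_rpow_mul hz (hS.mono subset_union_left) hc
    (hserve i)

theorem list_outlier_k_supplier_conversion {X : Type*} [MetricSpace X] [DecidableEq X]
    (k m : ℕ) (hk : 1 ≤ k) (z : ℝ) (hz : 0 < z)
    (C L : Finset X) (hC : C.Nonempty) (hL : k ≤ L.card)
    (S : Finset X) (hSL : S ⊆ L) (hS : S.Nonempty)
    (Z : Finset X) (hZC : Z ⊆ C) (hZm : Z.card ≤ m)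
    (hcost : ksCost z S (C \ Z) ≤ OPTCost z k m L C)
    (g : X → X) (hgL : ∀ x ∈ Z, g x ∈ L)
    (hgmin : ∀ x ∈ Z, ∀ f ∈ L, dist x (g x) ≤ dist x f)
    (C' : Finset X) (hC'sub : C' ⊆ C) (hC'card : C.card - m ≤ C'.card)
    (O : Fin k → Finset X)
    (hdisj : ∀ i j, i ≠ j → Disjoint (O i) (O j))
    (hcover : Finset.univ.biUnion O = C') :
    ∃ S' : Finset X, S' ⊆ S ∪ Z.image g ∧ S'.card ≤ k ∧ S'.Nonempty ∧
      Psi z S' O ≤ (3 : ℝ) ^ z * PsiStar z L O :=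
  list_outlier_k_supplier_conversion_general k m hk z hz C L hL S hS Z hcost g hgmin C' hC'sub
    hC'card O hcover

end
end

section
/- Suppose |U| = n ≥ 2 and there exist k sets in 𝒞 whose union contains all but at most m elements of U. Let S_1, …, S_t ∈ 𝒞 be any greedy sequence (setting U_0 = U and U_i = U_{i−1} \ S_i, each S_i maximizes |S ∩ U_{i−1}| over S ∈ 𝒞). If t ≥ k · ln(n), then the greedy sequence covers all but at most m elements of U, that is, |U_t| ≤ m. -/
open Finset

theorem greedy_coverage_klnn_steps {α : Type*} [DecidableEq α]
    (U : Finset α) (𝒞 : Finset (Finset α)) (h𝒞ne : 𝒞.Nonempty)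
    (h𝒞sub : ∀ S ∈ 𝒞, S ⊆ U) (k m : ℕ) (hk : 1 ≤ k)
    (n : ℕ) (hn : U.card = n) (hn2 : 2 ≤ n)
    (T : Fin k → Finset α) (hT : ∀ i, T i ∈ 𝒞)
    (hTcov : (U \ Finset.univ.biUnion T).card ≤ m)
    (t : ℕ) (S : ℕ → Finset α) (hS : ∀ i < t, S i ∈ 𝒞)
    (Us : ℕ → Finset α) (hUs0 : Us 0 = U)
    (hUsStep : ∀ i < t, Us (i + 1) = Us i \ S i)
    (hgreedy : ∀ i < t, ∀ T' ∈ 𝒞, (T' ∩ Us i).card ≤ (S i ∩ Us i).card)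
    (ht : (k : ℝ) * Real.log n ≤ t) :
    (Us t).card ≤ m := by
  have hk0 : (0:ℝ) < k := by exact_mod_cast hk
  have hc0 : (0:ℝ) ≤ 1 - 1/k := by
    have : (1:ℝ)/k ≤ 1 := by
      rw [div_le_one hk0]; exact_mod_cast hk
    linarith
  have hsubU : ∀ i, i ≤ t → Us i ⊆ U := by
    intro i
    induction i with
    | zero => intro _; rw [hUs0]
    | succ j ih =>
      intro hj
      rw [hUsStep j hj]
      exact Finset.sdiff_subset.trans (ih (Nat.le_of_succ_le hj))
  have hstep : ∀ i < t, ((Us (i+1)).card : ℝ) - m ≤ (1 - 1/k) * (((Us i).card : ℝ) - m) := by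
    intro i hi
    set A := Us i with hA
    have hAU : A ⊆ U := hsubU i (le_of_lt hi)
    have h1 : (A \ Finset.univ.biUnion T).card ≤ m := by
      refine le_trans (Finset.card_le_card ?_) hTcov
      intro x hx
      simp only [Finset.mem_sdiff] at hx ⊢
      exact ⟨hAU hx.1, hx.2⟩
    have h2 : A.card ≤ (A \ Finset.univ.biUnion T).card + (A ∩ Finset.univ.biUnion T).card := by
      rw [Finset.card_sdiff_add_card_inter]
    have h3 : (A ∩ Finset.univ.biUnion T).card ≤ ∑ j : Fin k, (T j ∩ A).card := by
      have hset : A ∩ Finset.univ.biUnion T = Finset.univ.biUnion (fun j => T j ∩ A) := by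
        ext x
        simp only [Finset.mem_inter, Finset.mem_biUnion, Finset.mem_univ, true_and]
        tauto
      rw [hset]
      exact Finset.card_biUnion_le
    have h5 : (A ∩ Finset.univ.biUnion T).card ≤ k * (S i ∩ A).card := by
      calc (A ∩ Finset.univ.biUnion T).card ≤ ∑ j : Fin k, (T j ∩ A).card := h3
        _ ≤ ∑ _j : Fin k, (S i ∩ A).card :=
            Finset.sum_le_sum (fun j _ => hgreedy i hi (T j) (hT j))
        _ = k * (S i ∩ A).card := by simp [Finset.sum_const, mul_comm]
    have h6 : (A.card : ℝ) - m ≤ (k : ℝ) * ((S i ∩ A).card : ℝ) := by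
      have h := h2.trans (Nat.add_le_add h1 h5)
      have := (Nat.cast_le (α := ℝ)).mpr h
      push_cast at this
      linarith
    have h7 : ((Us (i+1)).card : ℝ) = (A.card : ℝ) - ((S i ∩ A).card : ℝ) := by
      rw [hUsStep i hi]
      have hcd := Finset.card_sdiff_add_card_inter A (S i)
      rw [Finset.inter_comm]
      have := (Nat.cast_inj (R := ℝ)).mpr hcd
      push_cast at this
      linarith
    rw [h7]
    set x : ℝ := (A.card : ℝ) - m with hx
    set s : ℝ := ((S i ∩ A).card : ℝ) with hs
    have hdiv : x / k ≤ s := by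
      rw [div_le_iff₀ hk0]
      linarith [h6]
    have hexp : (1 - 1/(k:ℝ)) * x = x - x / k := by ring
    linarith
  have hiter : ∀ i ≤ t, ((Us i).card : ℝ) - m ≤ (1 - 1/(k:ℝ))^i * ((n:ℝ) - m) := by
    intro i
    induction i with
    | zero => intro _; simp [hUs0, hn]
    | succ j ih =>
      intro hj
      have hjt : j < t := hj
      calc ((Us (j+1)).card : ℝ) - m ≤ (1 - 1/k) * (((Us j).card:ℝ) - m) := hstep j hjt
        _ ≤ (1 - 1/k) * ((1 - 1/(k:ℝ))^j * ((n:ℝ) - m)) :=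
            mul_le_mul_of_nonneg_left (ih hjt.le) hc0
        _ = (1 - 1/(k:ℝ))^(j+1) * ((n:ℝ) - m) := by ring
  by_contra hcon
  push_neg at hcon
  have h1 : (1:ℝ) ≤ ((Us t).card : ℝ) - m := by
    have : m + 1 ≤ (Us t).card := hcon
    have := (Nat.cast_le (α := ℝ)).mpr this
    push_cast at this
    linarith
  have hnm : ((n:ℝ) - m) ≤ n := by
    have : (0:ℝ) ≤ m := Nat.cast_nonneg m
    linarith
  have hfin : (1:ℝ) ≤ (1 - 1/(k:ℝ))^t * n :=
    h1.trans ((hiter t le_rfl).trans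
      (mul_le_mul_of_nonneg_left hnm (pow_nonneg hc0 t)))
  have hn1 : (1:ℝ) < n := by exact_mod_cast lt_of_lt_of_le (by norm_num) hn2
  have hlogn : 0 < Real.log n := Real.log_pos hn1
  have ht0 : t ≠ 0 := by
    intro h0
    rw [h0] at ht
    push_cast at ht
    nlinarith
  have hclt : (1 - 1/(k:ℝ)) < Real.exp (-(1/k)) := by
    have hne : -(1/(k:ℝ)) ≠ 0 := by
      have : (0:ℝ) < 1/k := by positivity
      linarith
    have := Real.add_one_lt_exp hne
    linarith
  have hpow : (1 - 1/(k:ℝ))^t < Real.exp (-(1/k)) ^ t :=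
    pow_lt_pow_left₀ hclt hc0 ht0
  have hexp_pow : Real.exp (-(1/(k:ℝ))) ^ t = Real.exp (-((t:ℝ)/k)) := by
    rw [← Real.exp_nat_mul]
    congr 1
    ring
  have hle : Real.exp (-((t:ℝ)/k)) ≤ Real.exp (-(Real.log n)) := by
    apply Real.exp_le_exp.mpr
    have : Real.log n ≤ (t:ℝ) / k := by
      rw [le_div_iff₀ hk0]
      linarith [ht]
    linarith
  have hn0 : (0:ℝ) < n := by linarith
  have hinv : Real.exp (-(Real.log n)) = 1/(n:ℝ) := by
    rw [Real.exp_neg, Real.exp_log hn0, one_div]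
  have hlt : (1 - 1/(k:ℝ))^t < 1/(n:ℝ) := by
    calc (1 - 1/(k:ℝ))^t < Real.exp (-(1/(k:ℝ))) ^ t := hpow
      _ = Real.exp (-((t:ℝ)/k)) := hexp_pow
      _ ≤ Real.exp (-(Real.log n)) := hle
      _ = 1/(n:ℝ) := hinv
  have : (1 - 1/(k:ℝ))^t * n < (1/(n:ℝ)) * n := mul_lt_mul_of_pos_right hlt hn0
  have hone : (1/(n:ℝ)) * n = 1 := by field_simp
  linarith
end

section
/- There exist indices i_1, …, i_k ∈ {1, …, M} with S_{i_1} ∪ … ∪ S_{i_k} = U if and only if there exists a nonempty subset F ⊆ X with |F| ≤ k such that every point p ∈ X satisfies min_{f ∈ F} d(f, p) ≤ 1 (that is, the k-center cost of the instance with clients X and candidate centers X is at most 1). -/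
open Finset

noncomputable section

/-- The metric of the reduction from set coverage to k-center: facility points `Sum.inl i`
(one per set `S i`) and element points `Sum.inr e` (one per element of `U`). -/
def covDist {α : Type*} [DecidableEq α] {M : ℕ} (U : Finset α) (S : Fin M → Finset α) :
    (Fin M ⊕ {e // e ∈ U}) → (Fin M ⊕ {e // e ∈ U}) → ℝ
  | Sum.inl i, Sum.inl j => if i = j then 0 else 1
  | Sum.inl i, Sum.inr e => if (e : α) ∈ S i then 1 else 2
  | Sum.inr e, Sum.inl i => if (e : α) ∈ S i then 1 else 2
  | Sum.inr e, Sum.inr e' => if e = e' then 0 else 2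

theorem set_coverage_iff_k_center_cost_le_one {α : Type*} [DecidableEq α]
    (U : Finset α) (hU : U.Nonempty) (M : ℕ) (hM : 1 ≤ M)
    (S : Fin M → Finset α) (hSsub : ∀ i, S i ⊆ U)
    (hScov : ∀ e ∈ U, ∃ i, e ∈ S i) (k : ℕ) (hk : 1 ≤ k) :
    (∃ f : Fin k → Fin M, ∀ e ∈ U, ∃ j, e ∈ S (f j)) ↔
      (∃ F : Finset (Fin M ⊕ {e // e ∈ U}), F.Nonempty ∧ F.card ≤ k ∧
        ∀ p : Fin M ⊕ {e // e ∈ U}, ∃ c ∈ F, covDist U S c p ≤ 1) := by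
  constructor
  · rintro ⟨f, hf⟩
    refine ⟨Finset.univ.image fun j => Sum.inl (f j),
      ⟨Sum.inl (f ⟨0, hk⟩), Finset.mem_image_of_mem _ (mem_univ _)⟩,
      (Finset.card_image_le).trans (by simp), ?_⟩
    rintro (i | e)
    · refine ⟨Sum.inl (f ⟨0, hk⟩), Finset.mem_image_of_mem _ (mem_univ _), ?_⟩
      simp only [covDist]
      split <;> norm_num
    · obtain ⟨j, hj⟩ := hf e e.2
      exact ⟨Sum.inl (f j), Finset.mem_image_of_mem _ (mem_univ _), by simp [covDist, hj]⟩
  · rintro ⟨F, hFne, hFk, hcov⟩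
    set g : (Fin M ⊕ {e // e ∈ U}) → Fin M :=
      Sum.elim id (fun e => (hScov e.1 e.2).choose) with hg
    have key : ∀ c : Fin M ⊕ {e // e ∈ U}, ∀ e : {e // e ∈ U},
        covDist U S c (Sum.inr e) ≤ 1 → (e : α) ∈ S (g c) := by
      rintro (i | e') e hd
      · by_cases h : (e : α) ∈ S i
        · simpa [hg] using h
        · simp [covDist, h] at hd
      · by_cases h : e' = e
        · subst h
          simpa [hg] using (hScov e'.1 e'.2).choose_spec
        · simp [covDist, h] at hd
    have hn : 0 < F.card := Finset.card_pos.mpr hFne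
    let eqv := F.equivFin
    refine ⟨fun j => g (eqv.symm ⟨j % F.card, Nat.mod_lt _ hn⟩ : F), ?_⟩
    intro e he
    obtain ⟨c, hcF, hd⟩ := hcov (Sum.inr ⟨e, he⟩)
    refine ⟨⟨(eqv ⟨c, hcF⟩).val, lt_of_lt_of_le (eqv ⟨c, hcF⟩).2 hFk⟩, ?_⟩
    have : ((eqv ⟨c, hcF⟩).val : ℕ) % F.card = (eqv ⟨c, hcF⟩).val :=
      Nat.mod_eq_of_lt (eqv ⟨c, hcF⟩).2
    have heq : (eqv.symm ⟨(eqv ⟨c, hcF⟩).val % F.card, Nat.mod_lt _ hn⟩ : F) = ⟨c, hcF⟩ := by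
      rw [show (⟨(eqv ⟨c, hcF⟩).val % F.card, Nat.mod_lt _ hn⟩ : Fin F.card) = eqv ⟨c, hcF⟩
        from Fin.ext this]
      exact eqv.symm_apply_apply _
    simpa [heq] using key c ⟨e, he⟩ hd

end
end

section
/- Let λ ≥ 0 be a real number, and for each facility f ∈ L define the set S_f = { x ∈ C : d(x, f)^z ≤ λ }. Then there exists a subset F ⊆ L with 1 ≤ |F| ≤ k and |⋃_{f ∈ F} S_f| ≥ |C| − m if and only if there exist a subset F ⊆ L with 1 ≤ |F| ≤ k and a subset Z ⊆ C with |Z| ≤ m such that cost(F, C \ Z) ≤ λ. (This is the correctness of the reduction from outlier k-supplier at threshold λ to max k-coverage.) -/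
open Finset

noncomputable section

lemma minOver_le' {X : Type*} {s : Finset X} {f : X → ℝ} {a : X} (ha : a ∈ s) :
    minOver s f ≤ f a :=
  csInf_le (Set.Finite.bddBelow (s.finite_toSet.image f)) ⟨a, ha, rfl⟩

lemma maxOver_le' {X : Type*} {s : Finset X} {f : X → ℝ} {lam : ℝ} (h0 : 0 ≤ lam)
    (h : ∀ x ∈ s, f x ≤ lam) : maxOver s f ≤ lam :=
  Real.sSup_le (by rintro y ⟨x, hx, rfl⟩; exact h x hx) h0

lemma le_maxOver' {X : Type*} {s : Finset X} {f : X → ℝ} {a : X} (ha : a ∈ s) :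
    f a ≤ maxOver s f :=
  le_csSup (Set.Finite.bddAbove (s.finite_toSet.image f)) ⟨a, ha, rfl⟩

lemma exists_minOver {X : Type*} {s : Finset X} (f : X → ℝ) (hs : s.Nonempty) :
    ∃ a ∈ s, f a = minOver s f := by
  have hne : (f '' ↑s).Nonempty := ⟨f hs.choose, hs.choose, hs.choose_spec, rfl⟩
  obtain ⟨a, ha, h⟩ := hne.csInf_mem (s.finite_toSet.image f)
  exact ⟨a, ha, h⟩

open scoped Classical in
theorem outlier_k_supplier_max_coverage_reduction {X : Type*} [MetricSpace X] [DecidableEq X]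
    (k m : ℕ) (hk : 1 ≤ k) (z : ℝ) (hz : 0 < z)
    (C L : Finset X) (hC : C.Nonempty) (hL : L.Nonempty)
    (lam : ℝ) (hlam : 0 ≤ lam) :
    (∃ F : Finset X, F ⊆ L ∧ 1 ≤ F.card ∧ F.card ≤ k ∧
        C.card - m ≤ (F.biUnion fun f => C.filter fun x => dist x f ^ z ≤ lam).card) ↔
      (∃ F : Finset X, F ⊆ L ∧ 1 ≤ F.card ∧ F.card ≤ k ∧
        ∃ Z : Finset X, Z ⊆ C ∧ Z.card ≤ m ∧ ksCost z F (C \ Z) ≤ lam) := by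
  constructor
  · rintro ⟨F, hFL, hF1, hFk, hcov⟩
    set S := F.biUnion fun f => C.filter fun x => dist x f ^ z ≤ lam with hS
    have hSC : S ⊆ C := by
      intro x hx
      simp only [hS, Finset.mem_biUnion, Finset.mem_filter] at hx
      obtain ⟨f, _, hx, _⟩ := hx
      exact hx
    refine ⟨F, hFL, hF1, hFk, C \ S, Finset.sdiff_subset, ?_, ?_⟩
    · have := Finset.card_sdiff_of_subset hSC
      have hSc := Finset.card_le_card hSC
      omega
    · have hCS : C \ (C \ S) = S := by
        rw [Finset.sdiff_sdiff_self_left, Finset.inter_eq_right.mpr hSC]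
      rw [hCS]
      refine maxOver_le' hlam fun x hx => ?_
      simp only [hS, Finset.mem_biUnion, Finset.mem_filter] at hx
      obtain ⟨f, hfF, _, hxd⟩ := hx
      calc minOver F (fun f => dist f x ^ z) ≤ dist f x ^ z := minOver_le' hfF
        _ ≤ lam := by rwa [dist_comm]
  · rintro ⟨F, hFL, hF1, hFk, Z, hZC, hZm, hcost⟩
    refine ⟨F, hFL, hF1, hFk, ?_⟩
    set S := F.biUnion fun f => C.filter fun x => dist x f ^ z ≤ lam with hS
    have hsub : C \ Z ⊆ S := by
      intro x hx
      have hxC : x ∈ C := (Finset.mem_sdiff.mp hx).1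
      have hmin : minOver F (fun f => dist f x ^ z) ≤ lam :=
        le_trans (le_maxOver' (f := fun x => minOver F fun f => dist f x ^ z) hx) hcost
      obtain ⟨f, hfF, hfeq⟩ := exists_minOver (fun f => dist f x ^ z)
        (Finset.card_pos.mp hF1)
      simp only [hS, Finset.mem_biUnion, Finset.mem_filter]
      exact ⟨f, hfF, hxC, by rw [dist_comm]; exact hfeq ▸ (hfeq ▸ hmin)⟩
    have h1 := Finset.card_le_card hsub
    have h2 := Finset.card_sdiff_of_subset hZC
    omega

end
end
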